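/- Let ι be a finite set of feature indices with full set N = ι, g : Finset ι → ℝ a set function, and μ its Harsanyi dividends μ(L) = ∑_{S ⊆ L} (-1)^{|L|-|S|} g(S). Then for any subset S ⊆ ι, the relevance of the query of feature presence S with unit weight vector, defined as the sum of Harsanyi dividends over all subsets intersecting S, equals the Occlusion Sensitivity value: ∑_{L ⊆ N, L ∩ S ≠ ∅} μ(L) = g(N) − g(N \ S). -/
import Mathlib

open Finset

lemma mobius_inv {ι : Type*} [DecidableEq ι]
    (g μ : Finset ι → ℝ)
    (hμ : ∀ L : Finset ι,
      μ L = ∑ S ∈ L.powerset, (-1 : ℝ) ^ (L.card - S.card) * g S)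
    (T : Finset ι) : ∑ L ∈ T.powerset, μ L = g T := by
  simp_rw [hμ]
  rw [Finset.sum_comm' (t' := T.powerset)
    (s' := fun A => T.powerset.filter (fun L => A ⊆ L))
    (f := fun L A => (-1 : ℝ) ^ (L.card - A.card) * g A)
    (by
      intro L A
      simp only [mem_powerset, mem_filter]
      constructor
      · rintro ⟨hLT, hAL⟩; exact ⟨⟨hLT, hAL⟩, hAL.trans hLT⟩
      · rintro ⟨⟨hLT, hAL⟩, _⟩; exact ⟨hLT, hAL⟩)]
  have h1 : ∀ A ∈ T.powerset,
      (∑ L ∈ T.powerset.filter (fun L => A ⊆ L), (-1 : ℝ) ^ (L.card - A.card) * g A)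
        = (if A = T then (1:ℝ) else 0) * g A := by
    intro A hA
    rw [mem_powerset] at hA
    rw [← Finset.sum_mul]
    congr 1
    have hbij : ∑ L ∈ T.powerset.filter (fun L => A ⊆ L), (-1 : ℝ) ^ (L.card - A.card)
        = ∑ B ∈ (T \ A).powerset, (-1 : ℝ) ^ B.card := by
      apply Finset.sum_nbij' (fun L => L \ A) (fun B => A ∪ B)
      · intro L hL
        simp only [mem_filter, mem_powerset] at hL ⊢
        exact sdiff_subset_sdiff hL.1 le_rfl
      · intro B hB
        simp only [mem_powerset] at hB
        simp only [mem_filter, mem_powerset]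
        exact ⟨union_subset hA (hB.trans (sdiff_subset)), subset_union_left⟩
      · intro L hL
        simp only [mem_filter, mem_powerset] at hL
        exact union_sdiff_of_subset hL.2
      · intro B hB
        simp only [mem_powerset] at hB
        rw [union_sdiff_cancel_left (disjoint_sdiff.mono_right hB)]
      · intro L hL
        simp only [mem_filter, mem_powerset] at hL
        rw [card_sdiff_of_subset hL.2]
    have hz : ∑ B ∈ (T \ A).powerset, (-1 : ℝ) ^ B.card
        = if T \ A = ∅ then 1 else 0 := by
      have h := congrArg (fun z : ℤ => (z : ℝ))
        (Finset.sum_powerset_neg_one_pow_card (x := T \ A))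
      push_cast at h
      simpa [apply_ite (fun z : ℤ => (z : ℝ))] using h
    rw [hbij, hz]
    simp only [sdiff_eq_empty_iff_subset]
    by_cases h : A = T
    · simp [h]
    · rw [if_neg, if_neg h]
      intro hTA
      exact h (subset_antisymm hA hTA)
  rw [Finset.sum_congr rfl h1]
  simp

/-- The relevance of the feature-presence query `S` (sum of
Harsanyi dividends over all subsets intersecting `S`) equals the Occlusion
Sensitivity value `g(N) − g(N \ S)`. -/
theorem presence_query_relevance
    {ι : Type*} [Fintype ι] [DecidableEq ι]
    (g μ : Finset ι → ℝ)
    (hμ : ∀ L : Finset ι,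
      μ L = ∑ S ∈ L.powerset, (-1 : ℝ) ^ (L.card - S.card) * g S)
    (S : Finset ι) :
    ∑ L ∈ Finset.univ.filter (fun L : Finset ι => L ∩ S ≠ ∅), μ L
      = g Finset.univ - g (Finset.univ \ S) := by
  have h1 : ∑ L ∈ (Finset.univ : Finset ι).powerset, μ L = g Finset.univ :=
    mobius_inv g μ hμ _
  have h2 : ∑ L ∈ (Finset.univ \ S).powerset, μ L = g (Finset.univ \ S) :=
    mobius_inv g μ hμ _
  rw [← h1, ← h2]
  rw [eq_sub_iff_add_eq, ← Finset.sum_union]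
  · congr 1
    ext L
    simp only [mem_union, mem_filter, mem_powerset, Finset.mem_univ, true_and,
      subset_sdiff, Finset.disjoint_iff_inter_eq_empty, subset_univ]
    tauto
  · rw [Finset.disjoint_left]
    intro L hL hL2
    simp only [mem_filter] at hL
    simp only [mem_powerset, subset_sdiff, Finset.disjoint_iff_inter_eq_empty] at hL2
    exact hL.2 hL2.2
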